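/- arXiv:math/0701780 — 2 statements merged into one kernel-verified Lean document; each statement's English description precedes it below -/
import Mathlib

section
/- Let A and H be self-adjoint operators on a Hilbert space 𝓗. Let 𝓓 ⊂ 𝓓(H) ∩ 𝓓(A) be a subspace which is a core for A and satisfies H𝓓 ⊂ 𝓓. Let (χ_n)_{n∈ℕ} be bounded operators such that: (1) χ_n𝓓 ⊂ 𝓓, χ_n → 1 strongly, and sup_n ‖χ_n‖_{B(𝓓(H))} < ∞; (2) Aχ_n f → Af for all f ∈ 𝓓; (3) there is z ∉ σ(H) with χ_n R(z)𝓓 ⊂ 𝓓 and χ_n R(z̄)𝓓 ⊂ 𝓓. Suppose moreover that for all f ∈ 𝓓, A[H, χ_n]R(z)f → 0 and A[H, χ_n]R(z̄)f → 0 as n → ∞, and that there is a finite c with |⟨Af, Hf⟩ − ⟨Hf, Af⟩| ≤ c(‖Hf‖² + ‖f‖²) for all f ∈ 𝓓. Then H ∈ C¹(A). -/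
open Filter Topology MeasureTheory
open scoped ENNReal

noncomputable section

local notation "⟪" x ", " y "⟫" => @inner ℂ _ _ x y

variable {H : Type*} [NormedAddCommGroup H] [InnerProductSpace ℂ H] [CompleteSpace H]

/-- `pApply T x` is `T x` when `x` lies in the domain of the partially defined operator `T`,
and `0` otherwise. -/
def pApply (T : H →ₗ.[ℂ] H) (x : H) : H :=
  letI := Classical.dec (x ∈ T.domain)
  if hx : x ∈ T.domain then T ⟨x, hx⟩ else 0

/-- `R` is a bounded two-sided inverse for `T - z`. -/
def IsResolventAt (T : H →ₗ.[ℂ] H) (z : ℂ) (R : H →L[ℂ] H) : Prop :=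
  (∀ y : H, R y ∈ T.domain ∧ pApply T (R y) - z • R y = y) ∧
    ∀ x ∈ T.domain, R (pApply T x - z • x) = x

/-- Self-adjointness of an unbounded operator: densely defined, symmetric, and the domain of
the adjoint is contained in the domain. -/
def IsSelfAdjointOp (T : H →ₗ.[ℂ] H) : Prop :=
  Dense (T.domain : Set H) ∧
    (∀ x ∈ T.domain, ∀ y ∈ T.domain, ⟪pApply T x, y⟫ = ⟪x, pApply T y⟫) ∧
    ∀ y w : H, (∀ x ∈ T.domain, ⟪pApply T x, y⟫ = ⟪x, w⟫) → y ∈ T.domain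

/-- A Weyl sequence for `(T, l)`. -/
structure IsWeylSequence (T : H →ₗ.[ℂ] H) (l : ℝ) (ψ : ℕ → H) : Prop where
  mem : ∀ n, ψ n ∈ T.domain
  norm_one : ∀ n, ‖ψ n‖ = 1
  weak_null : ∀ y : H, Tendsto (fun n => ⟪ψ n, y⟫) atTop (𝓝 0)
  apply_null : Tendsto (fun n => pApply T (ψ n) - (l : ℂ) • ψ n) atTop (𝓝 0)

/-- The essential spectrum, described via Weyl sequences. -/
def essSpec (T : H →ₗ.[ℂ] H) : Set ℝ := {l | ∃ ψ, IsWeylSequence T l ψ}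

/-- The eigenspace of an unbounded operator. -/
def eigSpace (T : H →ₗ.[ℂ] H) (l : ℂ) : Submodule ℂ H :=
  Submodule.span ℂ {x : H | x ∈ T.domain ∧ pApply T x = l • x}

def IsEigenvalue (T : H →ₗ.[ℂ] H) (l : ℂ) : Prop := eigSpace T l ≠ ⊥

/-- `T` has a compact resolvent. -/
def HasCompactResolvent (T : H →ₗ.[ℂ] H) : Prop :=
  ∃ z R, IsResolventAt T z R ∧ IsCompactOperator fun x => R x

/-- Purely discrete spectrum = empty essential spectrum. -/
def HasPurelyDiscreteSpectrum (T : H →ₗ.[ℂ] H) : Prop := essSpec T = ∅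

/-- The eigenvalue counting function (Glazman min-max description). -/
def countingFun (T : H →ₗ.[ℂ] H) (lam : ℝ) : ℝ≥0∞ :=
  ⨆ V : {V : Submodule ℂ H // (V : Set H) ⊆ (T.domain : Set H) ∧
      ∀ x ∈ V, (⟪pApply T x, x⟫).re ≤ lam * ‖x‖ ^ 2},
    (Module.finrank ℂ V.1 : ℝ≥0∞)

/-- `T` is the Friedrichs extension of `T0`. -/
def IsFriedrichsExtensionOf (T T0 : H →ₗ.[ℂ] H) : Prop :=
  (∀ x ∈ T0.domain, x ∈ T.domain ∧ pApply T x = pApply T0 x) ∧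
    IsSelfAdjointOp T ∧
    ∀ x ∈ T.domain, ∃ u : ℕ → H, (∀ n, u n ∈ T0.domain) ∧
      Tendsto u atTop (𝓝 x) ∧
      ∀ ε > 0, ∃ N, ∀ m ≥ N, ∀ n ≥ N,
        (⟪pApply T0 (u n - u m), u n - u m⟫).re < ε

/-- `U` is the strongly continuous unitary group generated by `T` (i.e. `U t = e^{itT}`). -/
structure IsUnitaryGroupOf (T : H →ₗ.[ℂ] H) (U : ℝ → H →L[ℂ] H) : Prop where
  map_zero : U 0 = ContinuousLinearMap.id ℂ H
  isometry : ∀ t x, ‖U t x‖ = ‖x‖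
  grp : ∀ s t, U (s + t) = (U s).comp (U t)
  cont : ∀ x, Continuous fun t => U t x
  gen : ∀ x ∈ T.domain, HasDerivAt (fun t => U t x) (Complex.I • pApply T x) 0

/-- `μ` assigns to each vector its spectral measure with respect to `T`
(characterized via the Borel transform of the resolvent). -/
def IsSpectralMeasureFamily (T : H →ₗ.[ℂ] H) (μ : H → Measure ℝ) : Prop :=
  ∀ z : ℂ, z.im ≠ 0 →
    ∃ R : H →L[ℂ] H, IsResolventAt T z R ∧
      ∀ ψ : H, ⟪ψ, R ψ⟫ = ∫ t : ℝ, ((t : ℂ) - z)⁻¹ ∂(μ ψ)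

/-- A measure on `ℝ` has no singular continuous part. -/
def MeasureHasNoSCpart (ν : Measure ℝ) : Prop :=
  ∃ d a : Measure ℝ, ν = d + a ∧
    (∃ s : Set ℝ, s.Countable ∧ d sᶜ = 0) ∧ a.AbsolutelyContinuous volume

/-- `T` has no singular continuous spectrum. -/
def HasNoSingularContinuousSpectrum (T : H →ₗ.[ℂ] H) : Prop :=
  ∀ μ : H → Measure ℝ, IsSpectralMeasureFamily T μ → ∀ ψ, MeasureHasNoSCpart (μ ψ)

/-- The pure point subspace. -/
def ppSubspace (T : H →ₗ.[ℂ] H) : Submodule ℂ H :=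
  (⨆ l : ℂ, eigSpace T l).topologicalClosure

/-- The continuous spectral subspace. -/
def contSubspace (T : H →ₗ.[ℂ] H) : Submodule ℂ H := (ppSubspace T)ᗮ


section Aux
set_option linter.unusedSectionVars false

lemma pApply_of_mem {T : H →ₗ.[ℂ] H} {x : H} (hx : x ∈ T.domain) :
    pApply T x = T ⟨x, hx⟩ := by
  rw [pApply]; exact dif_pos hx

lemma pApply_add {T : H →ₗ.[ℂ] H} {x y : H} (hx : x ∈ T.domain) (hy : y ∈ T.domain) :
    pApply T (x + y) = pApply T x + pApply T y := by
  rw [pApply_of_mem hx, pApply_of_mem hy, pApply_of_mem (add_mem hx hy)]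
  exact T.map_add ⟨x, hx⟩ ⟨y, hy⟩

lemma pApply_smul {T : H →ₗ.[ℂ] H} (a : ℂ) {x : H} (hx : x ∈ T.domain) :
    pApply T (a • x) = a • pApply T x := by
  rw [pApply_of_mem hx, pApply_of_mem (T.domain.smul_mem a hx)]
  exact T.map_smul a ⟨x, hx⟩

lemma pApply_sub {T : H →ₗ.[ℂ] H} {x y : H} (hx : x ∈ T.domain) (hy : y ∈ T.domain) :
    pApply T (x - y) = pApply T x - pApply T y := by
  rw [pApply_of_mem hx, pApply_of_mem hy, pApply_of_mem (sub_mem hx hy)]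
  exact T.toFun.map_sub ⟨x, hx⟩ ⟨y, hy⟩

set_option maxHeartbeats 1000000 in
lemma polar_bound (Hop A : H →ₗ.[ℂ] H) (D : Submodule ℂ H)
    (hDH : (D : Set H) ⊆ (Hop.domain : Set H)) (hDA : (D : Set H) ⊆ (A.domain : Set H))
    {c : ℝ} (hc0 : 0 ≤ c)
    (hc : ∀ f ∈ D, ‖⟪pApply A f, pApply Hop f⟫ - ⟪pApply Hop f, pApply A f⟫‖ ≤
      c * (‖pApply Hop f‖ ^ 2 + ‖f‖ ^ 2))
    {x y : H} (hx : x ∈ D) (hy : y ∈ D) :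
    ‖⟪pApply A x, pApply Hop y⟫ - ⟪pApply Hop x, pApply A y⟫‖ ≤
      4 * c * (‖pApply Hop x‖ ^ 2 + ‖x‖ ^ 2 + ‖pApply Hop y‖ ^ 2 + ‖y‖ ^ 2) := by
  have hxy : x + y ∈ D := add_mem hx hy
  have hxiy : x + Complex.I • y ∈ D := add_mem hx (D.smul_mem _ hy)
  have hA1 : pApply A (x + y) = pApply A x + pApply A y := pApply_add (hDA hx) (hDA hy)
  have hH1 : pApply Hop (x + y) = pApply Hop x + pApply Hop y := pApply_add (hDH hx) (hDH hy)
  have hA2 : pApply A (x + Complex.I • y) = pApply A x + Complex.I • pApply A y := by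
    rw [pApply_add (hDA hx) (A.domain.smul_mem _ (hDA hy)), pApply_smul _ (hDA hy)]
  have hH2 : pApply Hop (x + Complex.I • y) = pApply Hop x + Complex.I • pApply Hop y := by
    rw [pApply_add (hDH hx) (Hop.domain.smul_mem _ (hDH hy)), pApply_smul _ (hDH hy)]
  set Qx := ⟪pApply A x, pApply Hop x⟫ - ⟪pApply Hop x, pApply A x⟫ with hQx
  set Qy := ⟪pApply A y, pApply Hop y⟫ - ⟪pApply Hop y, pApply A y⟫ with hQy
  set Q1 := ⟪pApply A (x+y), pApply Hop (x+y)⟫ - ⟪pApply Hop (x+y), pApply A (x+y)⟫ with hQ1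
  set Q2 := ⟪pApply A (x + Complex.I • y), pApply Hop (x + Complex.I • y)⟫ -
      ⟪pApply Hop (x + Complex.I • y), pApply A (x + Complex.I • y)⟫ with hQ2
  have key : 2 * (⟪pApply A x, pApply Hop y⟫ - ⟪pApply Hop x, pApply A y⟫) =
      (Q1 - Qx - Qy) - Complex.I * (Q2 - Qx - Qy) := by
    rw [hQ1, hQ2, hQx, hQy, hA1, hH1, hA2, hH2]
    simp only [inner_add_left, inner_add_right, inner_smul_left, inner_smul_right,
      Complex.conj_I]
    ring_nf
    simp only [Complex.I_sq, show (Complex.I:ℂ)^3 = -Complex.I from by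
      rw [pow_succ, Complex.I_sq]; ring]
    ring
  have hb : ‖⟪pApply A x, pApply Hop y⟫ - ⟪pApply Hop x, pApply A y⟫‖ =
      ‖(Q1 - Qx - Qy) - Complex.I * (Q2 - Qx - Qy)‖ / 2 := by
    rw [← key]
    rw [norm_mul]
    simp [Complex.norm_ofNat]
  -- bounds on the four quadratic forms
  have bx := hc x hx
  have by' := hc y hy
  have b1 := hc _ hxy
  have b2 := hc _ hxiy
  rw [← hQx] at bx
  rw [← hQy] at by'
  rw [← hQ1] at b1
  rw [← hQ2] at b2
  rw [hH1] at b1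
  rw [hH2] at b2
  have hn1 : ‖pApply Hop x + pApply Hop y‖ ≤ ‖pApply Hop x‖ + ‖pApply Hop y‖ := norm_add_le _ _
  have hn2 : ‖x + y‖ ≤ ‖x‖ + ‖y‖ := norm_add_le _ _
  have hn3 : ‖pApply Hop x + Complex.I • pApply Hop y‖ ≤ ‖pApply Hop x‖ + ‖pApply Hop y‖ := by
    refine (norm_add_le _ _).trans ?_
    simp [norm_smul]
  have hn4 : ‖x + Complex.I • y‖ ≤ ‖x‖ + ‖y‖ := by
    refine (norm_add_le _ _).trans ?_
    simp [norm_smul]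
  have hQ1n : ‖Q1‖ ≤ c * ((‖pApply Hop x‖ + ‖pApply Hop y‖)^2 + (‖x‖ + ‖y‖)^2) := by
    refine b1.trans ?_
    have h1 : ‖pApply Hop x + pApply Hop y‖^2 ≤ (‖pApply Hop x‖ + ‖pApply Hop y‖)^2 := by
      exact pow_le_pow_left₀ (norm_nonneg _) hn1 2
    have h2 : ‖x + y‖^2 ≤ (‖x‖ + ‖y‖)^2 := pow_le_pow_left₀ (norm_nonneg _) hn2 2
    nlinarith
  have hQ2n : ‖Q2‖ ≤ c * ((‖pApply Hop x‖ + ‖pApply Hop y‖)^2 + (‖x‖ + ‖y‖)^2) := by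
    refine b2.trans ?_
    have h1 : ‖pApply Hop x + Complex.I • pApply Hop y‖^2 ≤ (‖pApply Hop x‖ + ‖pApply Hop y‖)^2 :=
      pow_le_pow_left₀ (norm_nonneg _) hn3 2
    have h2 : ‖x + Complex.I • y‖^2 ≤ (‖x‖ + ‖y‖)^2 := pow_le_pow_left₀ (norm_nonneg _) hn4 2
    nlinarith
  have htri : ‖(Q1 - Qx - Qy) - Complex.I * (Q2 - Qx - Qy)‖ ≤
      (‖Q1‖ + ‖Qx‖ + ‖Qy‖) + (‖Q2‖ + ‖Qx‖ + ‖Qy‖) := by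
    refine (norm_sub_le _ _).trans ?_
    gcongr
    · exact (norm_sub_le _ _).trans (by gcongr; exact norm_sub_le _ _)
    · rw [norm_mul, Complex.norm_I, one_mul]
      exact (norm_sub_le _ _).trans (by gcongr; exact norm_sub_le _ _)
  rw [hb]
  have h0x := norm_nonneg x
  have h0y := norm_nonneg y
  have h0Hx := norm_nonneg (pApply Hop x)
  have h0Hy := norm_nonneg (pApply Hop y)
  nlinarith [sq_nonneg (‖pApply Hop x‖ - ‖pApply Hop y‖), sq_nonneg (‖x‖ - ‖y‖),
    mul_nonneg hc0 (sq_nonneg (‖pApply Hop x‖ - ‖pApply Hop y‖)),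
    mul_nonneg hc0 (sq_nonneg (‖x‖ - ‖y‖))]

end Aux


set_option maxHeartbeats 1000000

/-- an abstract criterion for the `C¹(A)` regularity in Mourre theory.
Let `A` and `H` be self-adjoint operators on a Hilbert space `𝓗`.  Let
`𝓓 ⊂ 𝓓(H) ∩ 𝓓(A)` be a subspace which is a core for `A` and satisfies `H𝓓 ⊂ 𝓓`.  Let
`(χ_n)` be bounded operators such that: (1) `χ_n 𝓓 ⊂ 𝓓`, `χ_n → 1` strongly, and
`sup_n ‖χ_n‖_{B(𝓓(H))} < ∞`; (2) `A χ_n f → A f` for all `f ∈ 𝓓`; (3) there is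
`z ∉ σ(H)` with `χ_n R(z) 𝓓 ⊂ 𝓓` and `χ_n R(z̄) 𝓓 ⊂ 𝓓`.  Suppose moreover that for all
`f ∈ 𝓓`, `A [H, χ_n] R(z) f → 0` and `A [H, χ_n] R(z̄) f → 0` as `n → ∞`, and that there
is a finite `c` with `|⟨Af, Hf⟩ − ⟨Hf, Af⟩| ≤ c(‖Hf‖² + ‖f‖²)` for all `f ∈ 𝓓`.  Then
`H ∈ C¹(A)`.

Following Theorem A.1 of the paper, `H ∈ C¹(A)` is expressed by the equivalent
characterization: there is a finite `c` such that
`|⟨Af, R(z)f⟩ − ⟨R(z̄)f, Af⟩| ≤ c ‖f‖²` for all `f ∈ 𝓓(A)` (for the given `z ∉ σ(H)`). -/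
theorem stmt_16
    (Hop A : H →ₗ.[ℂ] H)
    (hsaH : IsSelfAdjointOp Hop) (hsaA : IsSelfAdjointOp A)
    (D : Submodule ℂ H)
    (hDH : (D : Set H) ⊆ (Hop.domain : Set H))
    (hDA : (D : Set H) ⊆ (A.domain : Set H))
    (hcore : ∀ x ∈ A.domain, ∀ ε > (0:ℝ), ∃ y ∈ D,
      ‖x - y‖ + ‖pApply A x - pApply A y‖ < ε)
    (hHD : ∀ x ∈ D, pApply Hop x ∈ D)
    (χ : ℕ → H →L[ℂ] H)
    (h1a : ∀ n, ∀ x ∈ D, χ n x ∈ D)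
    (h1b : ∀ x : H, Tendsto (fun n => χ n x) atTop (𝓝 x))
    (h1c : ∃ C : ℝ, ∀ n, ∀ x ∈ Hop.domain, χ n x ∈ Hop.domain ∧
      ‖χ n x‖ + ‖pApply Hop (χ n x)‖ ≤ C * (‖x‖ + ‖pApply Hop x‖))
    (h2 : ∀ f ∈ D, Tendsto (fun n => pApply A (χ n f)) atTop (𝓝 (pApply A f)))
    (z : ℂ) (R Rbar : H →L[ℂ] H)
    (hR : IsResolventAt Hop z R) (hRbar : IsResolventAt Hop (starRingEnd ℂ z) Rbar)
    (h3 : ∀ n, ∀ f ∈ D, χ n (R f) ∈ D ∧ χ n (Rbar f) ∈ D)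
    (hcomm : ∀ f ∈ D,
      Tendsto (fun n =>
        pApply A (pApply Hop (χ n (R f)) - χ n (pApply Hop (R f)))) atTop (𝓝 0) ∧
      Tendsto (fun n =>
        pApply A (pApply Hop (χ n (Rbar f)) - χ n (pApply Hop (Rbar f)))) atTop (𝓝 0))
    (hC1b : ∃ c : ℝ, ∀ f ∈ D,
      ‖⟪pApply A f, pApply Hop f⟫ - ⟪pApply Hop f, pApply A f⟫‖ ≤
        c * (‖pApply Hop f‖ ^ 2 + ‖f‖ ^ 2)) :
    ∃ c : ℝ, ∀ f ∈ A.domain,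
      ‖⟪pApply A f, R f⟫ - ⟪Rbar f, pApply A f⟫‖ ≤ c * ‖f‖ ^ 2 := by
  classical
  obtain ⟨C0, hC0⟩ := h1c
  obtain ⟨c0, hc0all⟩ := hC1b
  set c := max c0 0 with hcdef
  have hcnn : (0:ℝ) ≤ c := le_max_right _ _
  have hc : ∀ f ∈ D, ‖⟪pApply A f, pApply Hop f⟫ - ⟪pApply Hop f, pApply A f⟫‖ ≤
      c * (‖pApply Hop f‖ ^ 2 + ‖f‖ ^ 2) := by
    intro f hf
    refine (hc0all f hf).trans ?_
    apply mul_le_mul_of_nonneg_right (le_max_left _ _)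
    positivity
  set C := max C0 0 with hCdef
  have hCnn : (0:ℝ) ≤ C := le_max_right _ _
  have hCb : ∀ n, ∀ x ∈ Hop.domain, χ n x ∈ Hop.domain ∧
      ‖χ n x‖ + ‖pApply Hop (χ n x)‖ ≤ C * (‖x‖ + ‖pApply Hop x‖) := by
    intro n x hx
    refine ⟨(hC0 n x hx).1, (hC0 n x hx).2.trans ?_⟩
    apply mul_le_mul_of_nonneg_right (le_max_left _ _)
    positivity
  set KR : ℝ := ‖R‖ + 1 + ‖z‖ * ‖R‖ with hKRdef
  set KB : ℝ := ‖Rbar‖ + 1 + ‖z‖ * ‖Rbar‖ with hKBdef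
  set c2 : ℝ := 4 * c * ((C * KB) ^ 2 + (C * KR) ^ 2) with hc2def
  have hc2nn : 0 ≤ c2 := by positivity
  have hsymA := hsaA.2.1
  -- Step 1: the bound on the core D
  have key : ∀ f ∈ D, ‖⟪pApply A f, R f⟫ - ⟪Rbar f, pApply A f⟫‖ ≤ c2 * ‖f‖ ^ 2 := by
    intro f hf
    obtain ⟨hcm1, hcm2⟩ := hcomm f hf
    have hfA : f ∈ A.domain := hDA hf
    have hgH : R f ∈ Hop.domain := (hR.1 f).1
    have huH : Rbar f ∈ Hop.domain := (hRbar.1 f).1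
    have hHg : pApply Hop (R f) = f + z • R f := by
      have h := (hR.1 f).2
      rw [sub_eq_iff_eq_add] at h
      exact h
    have hHu : pApply Hop (Rbar f) = f + (starRingEnd ℂ z) • Rbar f := by
      have h := (hRbar.1 f).2
      rw [sub_eq_iff_eq_add] at h
      exact h
    have hgnD : ∀ n, χ n (R f) ∈ D := fun n => (h3 n f hf).1
    have hunD : ∀ n, χ n (Rbar f) ∈ D := fun n => (h3 n f hf).2
    have hfnD : ∀ n, χ n f ∈ D := fun n => h1a n f hf
    have hHgnD : ∀ n, pApply Hop (χ n (R f)) ∈ D := fun n => hHD _ (hgnD n)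
    have hHunD : ∀ n, pApply Hop (χ n (Rbar f)) ∈ D := fun n => hHD _ (hunD n)
    have hchiHg : ∀ n, χ n (pApply Hop (R f)) = χ n f + z • χ n (R f) := by
      intro n; rw [hHg, map_add, _root_.map_smul]
    have hchiHu : ∀ n, χ n (pApply Hop (Rbar f)) =
        χ n f + (starRingEnd ℂ z) • χ n (Rbar f) := by
      intro n; rw [hHu, map_add, _root_.map_smul]
    have hc1D : ∀ n, pApply Hop (χ n (R f)) - χ n (pApply Hop (R f)) ∈ D := fun n =>
      sub_mem (hHgnD n) (by rw [hchiHg n]; exact add_mem (hfnD n) (D.smul_mem _ (hgnD n)))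
    have hc2D : ∀ n, pApply Hop (χ n (Rbar f)) - χ n (pApply Hop (Rbar f)) ∈ D := fun n =>
      sub_mem (hHunD n) (by rw [hchiHu n]; exact add_mem (hfnD n) (D.smul_mem _ (hunD n)))
    have hdec1 : ∀ n, χ n f = pApply Hop (χ n (R f)) - z • χ n (R f) -
        (pApply Hop (χ n (R f)) - χ n (pApply Hop (R f))) := by
      intro n; rw [hchiHg n]; abel
    have hdec2 : ∀ n, χ n f = pApply Hop (χ n (Rbar f)) -
        (starRingEnd ℂ z) • χ n (Rbar f) -
        (pApply Hop (χ n (Rbar f)) - χ n (pApply Hop (Rbar f))) := by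
      intro n; rw [hchiHu n]; abel
    -- the main sequence and the error sequence
    set M : ℕ → ℂ := fun n => ⟪pApply Hop (χ n (Rbar f)), pApply A (χ n (R f))⟫ -
        ⟪pApply A (χ n (Rbar f)), pApply Hop (χ n (R f))⟫ with hMdef
    set Fn : ℕ → ℂ := fun n => ⟪pApply A f, χ n (R f)⟫ - ⟪χ n (Rbar f), pApply A f⟫
      with hFndef
    set Err : ℕ → ℂ := fun n =>
      (⟪pApply A f, χ n (R f)⟫ - ⟪pApply A (χ n f), χ n (R f)⟫)
      - ⟪pApply A (pApply Hop (χ n (Rbar f)) - χ n (pApply Hop (Rbar f))), χ n (R f)⟫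
      - (⟪χ n (Rbar f), pApply A f⟫ - ⟪χ n (Rbar f), pApply A (χ n f)⟫)
      + ⟪χ n (Rbar f), pApply A (pApply Hop (χ n (R f)) - χ n (pApply Hop (R f)))⟫
      with hErrdef
    have hids : ∀ n, Fn n = M n + Err n := by
      intro n
      have e1 : ⟪pApply A f, χ n (R f)⟫ = ⟪f, pApply A (χ n (R f))⟫ :=
        hsymA f hfA _ (hDA (hgnD n))
      have e2 : ⟪pApply A (χ n (Rbar f)), f⟫ = ⟪χ n (Rbar f), pApply A f⟫ :=
        hsymA _ (hDA (hunD n)) f hfA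
      have e3 : ⟪χ n f, pApply A (χ n (R f))⟫ =
          ⟪pApply Hop (χ n (Rbar f)), pApply A (χ n (R f))⟫ -
          z * ⟪χ n (Rbar f), pApply A (χ n (R f))⟫ -
          ⟪pApply Hop (χ n (Rbar f)) - χ n (pApply Hop (Rbar f)),
            pApply A (χ n (R f))⟫ := by
        conv_lhs => rw [hdec2 n]
        rw [inner_sub_left, inner_sub_left, inner_smul_left]
        simp [Complex.conj_conj]
        rw [inner_sub_left]; ring
      have e4 : ⟪pApply A (χ n (Rbar f)), χ n f⟫ =
          ⟪pApply A (χ n (Rbar f)), pApply Hop (χ n (R f))⟫ -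
          z * ⟪pApply A (χ n (Rbar f)), χ n (R f)⟫ -
          ⟪pApply A (χ n (Rbar f)),
            pApply Hop (χ n (R f)) - χ n (pApply Hop (R f))⟫ := by
        conv_lhs => rw [hdec1 n]
        rw [inner_sub_right, inner_sub_right, inner_smul_right]
      have e5 : ⟪pApply Hop (χ n (Rbar f)) - χ n (pApply Hop (Rbar f)),
            pApply A (χ n (R f))⟫ =
          ⟪pApply A (pApply Hop (χ n (Rbar f)) - χ n (pApply Hop (Rbar f))),
            χ n (R f)⟫ :=
        (hsymA _ (hDA (hc2D n)) _ (hDA (hgnD n))).symm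
      have e6 : ⟪pApply A (χ n (Rbar f)),
            pApply Hop (χ n (R f)) - χ n (pApply Hop (R f))⟫ =
          ⟪χ n (Rbar f),
            pApply A (pApply Hop (χ n (R f)) - χ n (pApply Hop (R f)))⟫ :=
        hsymA _ (hDA (hunD n)) _ (hDA (hc1D n))
      have e7 : ⟪χ n (Rbar f), pApply A (χ n (R f))⟫ =
          ⟪pApply A (χ n (Rbar f)), χ n (R f)⟫ :=
        (hsymA _ (hDA (hunD n)) _ (hDA (hgnD n))).symm
      have e8 : ⟪pApply A f, χ n (R f)⟫ - ⟪pApply A (χ n f), χ n (R f)⟫ =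
          ⟪f, pApply A (χ n (R f))⟫ - ⟪χ n f, pApply A (χ n (R f))⟫ := by
        rw [← inner_sub_left, ← inner_sub_left, ← pApply_sub hfA (hDA (hfnD n))]
        exact hsymA _ (sub_mem hfA (hDA (hfnD n))) _ (hDA (hgnD n))
      have e9 : ⟪pApply A (χ n (Rbar f)), f⟫ - ⟪pApply A (χ n (Rbar f)), χ n f⟫ =
          ⟪χ n (Rbar f), pApply A f⟫ - ⟪χ n (Rbar f), pApply A (χ n f)⟫ := by
        rw [← inner_sub_right, ← inner_sub_right, ← pApply_sub hfA (hDA (hfnD n))]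
        exact hsymA _ (hDA (hunD n)) _ (sub_mem hfA (hDA (hfnD n)))
      simp only [hFndef, hMdef, hErrdef]
      linear_combination e1 + e2 + e3 - e4 - e5 + e6 - z * e7 - e8 - e9
    have hFn : Tendsto Fn atTop (𝓝 (⟪pApply A f, R f⟫ - ⟪Rbar f, pApply A f⟫)) :=
      (Tendsto.inner tendsto_const_nhds (h1b (R f))).sub
        (Tendsto.inner (h1b (Rbar f)) tendsto_const_nhds)
    have hErr : Tendsto Err atTop (𝓝 0) := by
      have t1 : Tendsto (fun n => ⟪pApply A f, χ n (R f)⟫) atTop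
          (𝓝 ⟪pApply A f, R f⟫) := Tendsto.inner tendsto_const_nhds (h1b (R f))
      have t2 : Tendsto (fun n => ⟪pApply A (χ n f), χ n (R f)⟫) atTop
          (𝓝 ⟪pApply A f, R f⟫) := Tendsto.inner (h2 f hf) (h1b (R f))
      have t3 : Tendsto (fun n =>
          ⟪pApply A (pApply Hop (χ n (Rbar f)) - χ n (pApply Hop (Rbar f))),
            χ n (R f)⟫) atTop (𝓝 (0:ℂ)) := by
        have := Tendsto.inner (𝕜 := ℂ) hcm2 (h1b (R f))
        simpa using this
      have t4 : Tendsto (fun n => ⟪χ n (Rbar f), pApply A f⟫) atTop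
          (𝓝 ⟪Rbar f, pApply A f⟫) := Tendsto.inner (h1b (Rbar f)) tendsto_const_nhds
      have t5 : Tendsto (fun n => ⟪χ n (Rbar f), pApply A (χ n f)⟫) atTop
          (𝓝 ⟪Rbar f, pApply A f⟫) := Tendsto.inner (h1b (Rbar f)) (h2 f hf)
      have t6 : Tendsto (fun n =>
          ⟪χ n (Rbar f),
            pApply A (pApply Hop (χ n (R f)) - χ n (pApply Hop (R f)))⟫) atTop
          (𝓝 (0:ℂ)) := by
        have := Tendsto.inner (𝕜 := ℂ) (h1b (Rbar f)) hcm1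
        simpa using this
      have := (((t1.sub t2).sub t3).sub (t4.sub t5)).add t6
      simpa using this
    have hM : Tendsto M atTop (𝓝 (⟪pApply A f, R f⟫ - ⟪Rbar f, pApply A f⟫)) := by
      have hMF : M = fun n => Fn n - Err n := funext fun n => by rw [hids n]; ring
      rw [hMF]
      simpa using hFn.sub hErr
    -- uniform bound on M
    have hgb : ‖R f‖ + ‖pApply Hop (R f)‖ ≤ KR * ‖f‖ := by
      have h1 : ‖R f‖ ≤ ‖R‖ * ‖f‖ := R.le_opNorm f
      have h2' : ‖pApply Hop (R f)‖ ≤ ‖f‖ + ‖z‖ * (‖R‖ * ‖f‖) := by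
        rw [hHg]
        refine (norm_add_le _ _).trans ?_
        rw [norm_smul]
        have := mul_le_mul_of_nonneg_left h1 (norm_nonneg z)
        linarith
      rw [hKRdef]; nlinarith [norm_nonneg f, norm_nonneg z]
    have hub : ‖Rbar f‖ + ‖pApply Hop (Rbar f)‖ ≤ KB * ‖f‖ := by
      have h1 : ‖Rbar f‖ ≤ ‖Rbar‖ * ‖f‖ := Rbar.le_opNorm f
      have h2' : ‖pApply Hop (Rbar f)‖ ≤ ‖f‖ + ‖z‖ * (‖Rbar‖ * ‖f‖) := by
        rw [hHu]
        refine (norm_add_le _ _).trans ?_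
        rw [norm_smul, RCLike.norm_conj]
        have := mul_le_mul_of_nonneg_left h1 (norm_nonneg z)
        linarith
      rw [hKBdef]; nlinarith [norm_nonneg f, norm_nonneg z]
    have hMb : ∀ n, ‖M n‖ ≤ c2 * ‖f‖ ^ 2 := by
      intro n
      have hp := polar_bound Hop A D hDH hDA hcnn hc (hunD n) (hgnD n)
      have hMn : ‖M n‖ = ‖⟪pApply A (χ n (Rbar f)), pApply Hop (χ n (R f))⟫ -
          ⟪pApply Hop (χ n (Rbar f)), pApply A (χ n (R f))⟫‖ := norm_sub_rev _ _
      rw [hMn]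
      refine hp.trans ?_
      have hbg := (hCb n _ hgH).2.trans (mul_le_mul_of_nonneg_left hgb hCnn)
      have hbu := (hCb n _ huH).2.trans (mul_le_mul_of_nonneg_left hub hCnn)
      have n1 := norm_nonneg (χ n (R f))
      have n2 := norm_nonneg (pApply Hop (χ n (R f)))
      have n3 := norm_nonneg (χ n (Rbar f))
      have n4 := norm_nonneg (pApply Hop (χ n (Rbar f)))
      have hq1 : ‖pApply Hop (χ n (R f))‖ ^ 2 + ‖χ n (R f)‖ ^ 2 ≤
          (C * KR) ^ 2 * ‖f‖ ^ 2 := by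
        have hs : (‖χ n (R f)‖ + ‖pApply Hop (χ n (R f))‖) ^ 2 ≤ (C * (KR * ‖f‖)) ^ 2 :=
          pow_le_pow_left₀ (by positivity) hbg 2
        nlinarith [mul_nonneg n1 n2]
      have hq2 : ‖pApply Hop (χ n (Rbar f))‖ ^ 2 + ‖χ n (Rbar f)‖ ^ 2 ≤
          (C * KB) ^ 2 * ‖f‖ ^ 2 := by
        have hs : (‖χ n (Rbar f)‖ + ‖pApply Hop (χ n (Rbar f))‖) ^ 2 ≤
            (C * (KB * ‖f‖)) ^ 2 := pow_le_pow_left₀ (by positivity) hbu 2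
        nlinarith [mul_nonneg n3 n4]
      calc 4 * c * (‖pApply Hop (χ n (Rbar f))‖ ^ 2 + ‖χ n (Rbar f)‖ ^ 2 +
            ‖pApply Hop (χ n (R f))‖ ^ 2 + ‖χ n (R f)‖ ^ 2)
          ≤ 4 * c * ((C * KB) ^ 2 * ‖f‖ ^ 2 + (C * KR) ^ 2 * ‖f‖ ^ 2) := by
            apply mul_le_mul_of_nonneg_left _ (by positivity : (0:ℝ) ≤ 4 * c)
            linarith
        _ = c2 * ‖f‖ ^ 2 := by rw [hc2def]; ring
    exact le_of_tendsto' hM.norm hMb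
  -- Step 2: extension from D to the domain of A by the core property
  refine ⟨c2, fun f hfA => ?_⟩
  have hext : ∀ ε : ℝ, 0 < ε → ε ≤ 1 →
      ‖⟪pApply A f, R f⟫ - ⟪Rbar f, pApply A f⟫‖ ≤ c2 * ‖f‖ ^ 2 +
        (‖R‖ * ‖f‖ + ‖R‖ * (‖pApply A f‖ + 1) + ‖Rbar‖ * ‖pApply A f‖ +
          ‖Rbar‖ * (‖f‖ + 1) + c2 * (2 * ‖f‖ + 1)) * ε := by
    intro ε hε hε1
    obtain ⟨y, hyD, hy⟩ := hcore f hfA ε hε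
    have h1 : ‖f - y‖ ≤ ε := by
      have := norm_nonneg (pApply A f - pApply A y); linarith
    have h2' : ‖pApply A f - pApply A y‖ ≤ ε := by
      have := norm_nonneg (f - y); linarith
    have hyn : ‖y‖ ≤ ‖f‖ + ε := by
      have : y = f - (f - y) := by abel
      rw [this]
      exact (norm_sub_le _ _).trans (by linarith)
    have hAy : ‖pApply A y‖ ≤ ‖pApply A f‖ + ε := by
      have : pApply A y = pApply A f - (pApply A f - pApply A y) := by abel
      rw [this]
      exact (norm_sub_le _ _).trans (by linarith)
    have hid : ⟪pApply A f, R f⟫ - ⟪Rbar f, pApply A f⟫ =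
        (⟪pApply A y, R y⟫ - ⟪Rbar y, pApply A y⟫) +
        ⟪pApply A f - pApply A y, R f⟫ + ⟪pApply A y, R (f - y)⟫ -
        ⟪Rbar (f - y), pApply A f⟫ - ⟪Rbar y, pApply A f - pApply A y⟫ := by
      rw [map_sub, map_sub, inner_sub_left, inner_sub_right, inner_sub_left,
        inner_sub_right]
      ring
    have i0 := key y hyD
    have i1 : ‖⟪pApply A f - pApply A y, R f⟫‖ ≤ ε * (‖R‖ * ‖f‖) :=
      (norm_inner_le_norm (𝕜 := ℂ) _ _).trans
        (mul_le_mul h2' (R.le_opNorm f) (norm_nonneg _) hε.le)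
    have i2 : ‖⟪pApply A y, R (f - y)⟫‖ ≤ (‖pApply A f‖ + 1) * (‖R‖ * ε) := by
      refine (norm_inner_le_norm (𝕜 := ℂ) _ _).trans ?_
      have hr : ‖R (f - y)‖ ≤ ‖R‖ * ε :=
        (R.le_opNorm _).trans (mul_le_mul_of_nonneg_left h1 (norm_nonneg R))
      exact mul_le_mul (by linarith) hr (norm_nonneg _) (by positivity)
    have i3 : ‖⟪Rbar (f - y), pApply A f⟫‖ ≤ ‖Rbar‖ * ε * ‖pApply A f‖ := by
      refine (norm_inner_le_norm (𝕜 := ℂ) _ _).trans ?_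
      have hr : ‖Rbar (f - y)‖ ≤ ‖Rbar‖ * ε :=
        (Rbar.le_opNorm _).trans (mul_le_mul_of_nonneg_left h1 (norm_nonneg Rbar))
      exact mul_le_mul_of_nonneg_right hr (norm_nonneg _)
    have i4 : ‖⟪Rbar y, pApply A f - pApply A y⟫‖ ≤ (‖Rbar‖ * (‖f‖ + 1)) * ε := by
      refine (norm_inner_le_norm (𝕜 := ℂ) _ _).trans ?_
      have hr : ‖Rbar y‖ ≤ ‖Rbar‖ * (‖f‖ + 1) :=
        (Rbar.le_opNorm _).trans
          (mul_le_mul_of_nonneg_left (by linarith) (norm_nonneg Rbar))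
      exact mul_le_mul hr h2' (norm_nonneg _) (by positivity)
    have hsq : ‖y‖ ^ 2 ≤ ‖f‖ ^ 2 + (2 * ‖f‖ + 1) * ε := by
      have h := pow_le_pow_left₀ (norm_nonneg y) hyn 2
      nlinarith [norm_nonneg f]
    have htot : ‖⟪pApply A f, R f⟫ - ⟪Rbar f, pApply A f⟫‖ ≤
        ‖⟪pApply A y, R y⟫ - ⟪Rbar y, pApply A y⟫‖ +
        ‖⟪pApply A f - pApply A y, R f⟫‖ + ‖⟪pApply A y, R (f - y)⟫‖ +
        ‖⟪Rbar (f - y), pApply A f⟫‖ + ‖⟪Rbar y, pApply A f - pApply A y⟫‖ := by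
      rw [hid]
      refine (norm_sub_le _ _).trans ?_
      gcongr
      refine (norm_sub_le _ _).trans ?_
      gcongr
      exact (norm_add_le _ _).trans (by gcongr; exact norm_add_le _ _)
    nlinarith [mul_le_mul_of_nonneg_left hsq hc2nn]
  refine le_of_forall_pos_le_add fun δ hδ => ?_
  set Mf : ℝ := ‖R‖ * ‖f‖ + ‖R‖ * (‖pApply A f‖ + 1) + ‖Rbar‖ * ‖pApply A f‖ +
      ‖Rbar‖ * (‖f‖ + 1) + c2 * (2 * ‖f‖ + 1) with hMfdef
  have hMfnn : 0 ≤ Mf := by rw [hMfdef]; positivity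
  set ε : ℝ := min (δ / (Mf + 1)) 1 with hεdef
  have hεpos : 0 < ε := lt_min (div_pos hδ (by linarith)) one_pos
  have hε1 : ε ≤ 1 := min_le_right _ _
  have := hext ε hεpos hε1
  have hMfε : Mf * ε ≤ δ := by
    have h1 : ε ≤ δ / (Mf + 1) := min_le_left _ _
    have h2'' : Mf * ε ≤ (Mf + 1) * (δ / (Mf + 1)) := by
      apply mul_le_mul (by linarith) h1 hεpos.le (by linarith)
    rw [mul_div_cancel₀] at h2''
    · linarith
    · linarith
  linarith


end
end

section
/- Let H be a self-adjoint operator on a Hilbert space 𝓗, λ ∈ ℝ, and let (φ_n) be a Weyl sequence for (H, λ). Suppose there is a closed operator Φ on 𝓗 such that: (1) Φ𝓓(H) ⊂ 𝓓(H); (2) Φ(H+i)^{−1} is compact; (3) [H, Φ] extends to a compact operator from 𝓓(H) to 𝓗. Then there exist φ̃_n ∈ 𝓓(H) such that ((1−Φ)φ̃_n) is a Weyl sequence for (H, λ). -/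
open Filter Topology MeasureTheory
open scoped ENNReal

noncomputable section

local notation "⟪" x ", " y "⟫" => @inner ℂ _ _ x y

variable {H : Type*} [NormedAddCommGroup H] [InnerProductSpace ℂ H] [CompleteSpace H]

section Aux18

lemma st18_pApply_of_mem (T : H →ₗ.[ℂ] H) {x : H} (hx : x ∈ T.domain) :
    pApply T x = T ⟨x, hx⟩ := by
  unfold pApply
  exact dif_pos hx

lemma st18_pApply_of_not_mem (T : H →ₗ.[ℂ] H) {x : H} (hx : x ∉ T.domain) :
    pApply T x = 0 := by
  unfold pApply
  exact dif_neg hx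

lemma st18_pApply_add (T : H →ₗ.[ℂ] H) {x y : H} (hx : x ∈ T.domain) (hy : y ∈ T.domain) :
    pApply T (x + y) = pApply T x + pApply T y := by
  rw [st18_pApply_of_mem T hx, st18_pApply_of_mem T hy,
    st18_pApply_of_mem T (T.domain.add_mem hx hy)]
  exact T.map_add ⟨x, hx⟩ ⟨y, hy⟩

lemma st18_pApply_smul (T : H →ₗ.[ℂ] H) (c : ℂ) {x : H} (hx : x ∈ T.domain) :
    pApply T (c • x) = c • pApply T x := by
  rw [st18_pApply_of_mem T hx, st18_pApply_of_mem T (T.domain.smul_mem c hx)]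
  exact T.map_smul c ⟨x, hx⟩

lemma st18_pApply_sub (T : H →ₗ.[ℂ] H) {x y : H} (hx : x ∈ T.domain) (hy : y ∈ T.domain) :
    pApply T (x - y) = pApply T x - pApply T y := by
  have h2 : pApply T (-y) = -pApply T y := by
    have := st18_pApply_smul T (-1) hy; simpa using this
  rw [sub_eq_add_neg, st18_pApply_add T hx (T.domain.neg_mem hy), h2, ← sub_eq_add_neg]

/-- A compact linear operator maps bounded weakly null sequences to norm null sequences. -/
lemma st18_compact_weak_null {f : H → H} (hf : IsCompactOperator f)
    (hadd : ∀ x z, f (x + z) = f x + f z)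
    (hsmul : ∀ (a : ℂ) (x : H), f (a • x) = a • f x)
    {u : ℕ → H} {M : ℝ} (hM : 0 < M) (hb : ∀ n, ‖u n‖ ≤ M)
    (hw : ∀ z : H, Tendsto (fun n => ⟪u n, z⟫) atTop (𝓝 0)) :
    Tendsto (fun n => f (u n)) atTop (𝓝 0) := by
  classical
  let flin : H →ₗ[ℂ] H :=
    { toFun := f, map_add' := hadd, map_smul' := fun a x => hsmul a x }
  have hflc : IsCompactOperator (flin : H →ₗ[ℂ] H) := hf
  have hcont : Continuous f := hflc.continuous
  let g : H →L[ℂ] H := ⟨flin, hcont⟩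
  obtain ⟨K, hKc, hKn⟩ := hf
  obtain ⟨δ, hδpos, hδ⟩ := Metric.mem_nhds_iff.mp hKn
  set a : ℂ := ((2 * M / δ : ℝ) : ℂ) with ha
  have ha0 : (0 : ℝ) < 2 * M / δ := by positivity
  have hane : a ≠ 0 := by
    rw [ha]
    exact_mod_cast ha0.ne'
  have hKc' : IsCompact ((a • ·) '' K) := hKc.image (continuous_const_smul a)
  have hmemK' : ∀ n, f (u n) ∈ (a • ·) '' K := by
    intro n
    refine ⟨f (a⁻¹ • u n), hδ ?_, ?_⟩
    · rw [Metric.mem_ball, dist_zero_right, norm_smul]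
      have h1 : ‖a⁻¹‖ = (2 * M / δ)⁻¹ := by
        rw [norm_inv, ha, Complex.norm_real, Real.norm_eq_abs, abs_of_pos ha0]
      rw [h1]
      calc (2 * M / δ)⁻¹ * ‖u n‖ ≤ (2 * M / δ)⁻¹ * M :=
            mul_le_mul_of_nonneg_left (hb n) (by positivity)
        _ = δ / 2 := by field_simp
        _ < δ := by linarith
    · show a • f (a⁻¹ • u n) = f (u n)
      rw [← hsmul, smul_inv_smul₀ hane]
  refine tendsto_of_subseq_tendsto fun ns hns => ?_
  obtain ⟨z, hzK, ms, hmsmono, hmsto⟩ := hKc'.tendsto_subseq fun k => hmemK' (ns k)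
  have hz : z = 0 := by
    have h1 : ⟪z, z⟫ = (0 : ℂ) := by
      have h2 : Tendsto (fun k => ⟪f (u (ns (ms k))), z⟫) atTop (𝓝 ⟪z, z⟫) :=
        Filter.Tendsto.inner hmsto tendsto_const_nhds
      have h3 : Tendsto (fun k => ⟪f (u (ns (ms k))), z⟫) atTop (𝓝 0) := by
        have h4 : ∀ x : H, ⟪f x, z⟫ = ⟪x, (ContinuousLinearMap.adjoint g) z⟫ := fun x =>
          (ContinuousLinearMap.adjoint_inner_right g x z).symm
        simp only [h4]
        exact (hw _).comp (hns.comp hmsmono.tendsto_atTop)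
      exact tendsto_nhds_unique h2 h3
    exact inner_self_eq_zero.mp h1
  exact ⟨ms, by rwa [hz] at hmsto⟩

end Aux18

/-- Let `H` be a self-adjoint operator on a Hilbert space `𝓗`, `λ ∈ ℝ`,
and let `(φ_n)` be a Weyl sequence for `(H, λ)`.  Suppose there is a closed operator `Φ` on
`𝓗` such that: (1) `Φ𝓓(H) ⊂ 𝓓(H)`; (2) `Φ(H+i)^{−1}` is compact; (3) `[H, Φ]` extends to
a compact operator from `𝓓(H)` to `𝓗`.  Then there exist `φ̃_n ∈ 𝓓(H)` such that
`((1−Φ)φ̃_n)` is a Weyl sequence for `(H, λ)`.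

Compactness from `𝓓(H)` (with the graph norm) to `𝓗` is expressed, equivalently, as
compactness of the composition with the resolvent `(H+i)^{-1} : 𝓗 → 𝓓(H)`, i.e. of
`y ↦ [H, Φ] (H+i)^{-1} y`; note `(H+i)^{-1}` is the resolvent at `z = -i`. -/
theorem stmt_18
    (Hop : H →ₗ.[ℂ] H) (hsa : IsSelfAdjointOp Hop)
    (lam : ℝ) (φ : ℕ → H) (hφ : IsWeylSequence Hop lam φ)
    (Φ : H →ₗ.[ℂ] H) (hclosed : IsClosed (Φ.graph : Set (H × H)))
    (hdom : ∀ x ∈ Hop.domain, x ∈ Φ.domain ∧ pApply Φ x ∈ Hop.domain)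
    (R : H →L[ℂ] H) (hR : IsResolventAt Hop (-Complex.I) R)
    (hcomp : IsCompactOperator fun y => pApply Φ (R y))
    (hcommcomp : IsCompactOperator fun y =>
      pApply Hop (pApply Φ (R y)) - pApply Φ (pApply Hop (R y))) :
    ∃ ψ : ℕ → H, (∀ n, ψ n ∈ Hop.domain) ∧
      IsWeylSequence Hop lam fun n => ψ n - pApply Φ (ψ n) := by
  classical
  obtain ⟨hmem, hnorm1, hweak, happly⟩ := hφ
  have hRdom : ∀ x : H, R x ∈ Hop.domain := fun x => (hR.1 x).1
  have hRdomΦ : ∀ x : H, R x ∈ Φ.domain := fun x => (hdom _ (hRdom x)).1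
  have hΦRdom : ∀ x : H, pApply Φ (R x) ∈ Hop.domain := fun x => (hdom _ (hRdom x)).2
  set r : ℕ → H := fun n => pApply Hop (φ n) - (lam : ℂ) • φ n with hrdef
  set y : ℕ → H := fun n => pApply Hop (φ n) + Complex.I • φ n with hydef
  have hRy : ∀ n, R (y n) = φ n := by
    intro n
    have h := hR.2 (φ n) (hmem n)
    rw [neg_smul, sub_neg_eq_add] at h
    exact h
  have hrto : Tendsto r atTop (𝓝 0) := happly
  have hrnorm : Tendsto (fun n => ‖r n‖) atTop (𝓝 0) := by
    simpa using hrto.norm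
  obtain ⟨C, hC⟩ := hrnorm.bddAbove_range
  simp only [upperBounds, Set.mem_range, Set.mem_setOf_eq, forall_exists_index] at hC
  have hC' : ∀ n, ‖r n‖ ≤ C := fun n => hC n rfl
  set M : ℝ := C + ‖(lam : ℂ) + Complex.I‖ + 1 with hMdef
  have hyeq : ∀ n, y n = r n + ((lam : ℂ) + Complex.I) • φ n := by
    intro n
    simp only [hrdef, hydef, add_smul]
    abel
  have hM0 : 0 < M := by
    have h0 : (0 : ℝ) ≤ C := le_trans (norm_nonneg (r 0)) (hC' 0)
    positivity
  have hyb : ∀ n, ‖y n‖ ≤ M := by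
    intro n
    rw [hyeq n]
    calc ‖r n + ((lam : ℂ) + Complex.I) • φ n‖
        ≤ ‖r n‖ + ‖((lam : ℂ) + Complex.I) • φ n‖ := norm_add_le _ _
      _ ≤ C + ‖(lam : ℂ) + Complex.I‖ := by
          rw [norm_smul, hnorm1 n, mul_one]
          exact add_le_add (hC' n) le_rfl
      _ ≤ M := by rw [hMdef]; linarith
  have hyweak : ∀ z : H, Tendsto (fun n => ⟪y n, z⟫) atTop (𝓝 0) := by
    intro z
    have h1 : Tendsto (fun n => ⟪r n, z⟫) atTop (𝓝 0) := by
      apply squeeze_zero_norm (fun n => norm_inner_le_norm (𝕜 := ℂ) (r n) z)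
      simpa using hrnorm.mul_const ‖z‖
    have h2 : Tendsto (fun n => (starRingEnd ℂ) ((lam : ℂ) + Complex.I) * ⟪φ n, z⟫)
        atTop (𝓝 0) := by
      simpa using (hweak z).const_mul ((starRingEnd ℂ) ((lam : ℂ) + Complex.I))
    have h3 := h1.add h2
    rw [add_zero] at h3
    refine h3.congr fun n => ?_
    rw [hyeq n, inner_add_left, inner_smul_left]
  have hΦRadd : ∀ x z : H, pApply Φ (R (x + z)) = pApply Φ (R x) + pApply Φ (R z) := by
    intro x z; rw [map_add]; exact st18_pApply_add Φ (hRdomΦ x) (hRdomΦ z)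
  have hΦRsmul : ∀ (a : ℂ) (x : H), pApply Φ (R (a • x)) = a • pApply Φ (R x) := by
    intro a x; rw [_root_.map_smul]; exact st18_pApply_smul Φ a (hRdomΦ x)
  have hA : Tendsto (fun n => pApply Φ (φ n)) atTop (𝓝 0) := by
    have h := st18_compact_weak_null hcomp hΦRadd hΦRsmul hM0 hyb hyweak
    refine h.congr fun n => ?_
    rw [hRy n]
  set c : H → H := fun x => pApply Hop (pApply Φ (R x)) with hcdef
  have hcadd : ∀ x z : H, c (x + z) = c x + c z := by
    intro x z
    simp only [hcdef]
    rw [hΦRadd]; exact st18_pApply_add Hop (hΦRdom x) (hΦRdom z)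
  have hcsmul : ∀ (a : ℂ) (x : H), c (a • x) = a • c x := by
    intro a x; simp only [hcdef]; rw [hΦRsmul]; exact st18_pApply_smul Hop a (hΦRdom x)
  have hsplit : ∀ n, pApply Hop (φ n - pApply Φ (φ n)) = pApply Hop (φ n) - c (y n) := by
    intro n
    rw [st18_pApply_sub Hop (hmem n) (hdom _ (hmem n)).2]
    simp only [hcdef]; rw [hRy n]
  have hB : Tendsto (fun n => pApply Hop (φ n - pApply Φ (φ n)) -
      (lam : ℂ) • (φ n - pApply Φ (φ n))) atTop (𝓝 0) := by
    by_cases hD : ∀ x : H, x ∈ Φ.domain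
    · -- `Φ` is everywhere defined, hence bounded by the closed graph theorem.
      let Φlin : H →ₗ[ℂ] H :=
        { toFun := fun x => pApply Φ x,
          map_add' := fun x z => st18_pApply_add Φ (hD x) (hD z),
          map_smul' := fun a x => st18_pApply_smul Φ a (hD x) }
      have hgraph : (Φlin.graph : Set (H × H)) = (Φ.graph : Set (H × H)) := by
        ext p
        simp only [SetLike.mem_coe, LinearMap.mem_graph_iff, LinearPMap.mem_graph_iff]
        constructor
        · intro h
          exact ⟨⟨p.1, hD p.1⟩, rfl, by rw [← st18_pApply_of_mem Φ (hD p.1)]; exact h.symm⟩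
        · rintro ⟨q, hq1, hq2⟩
          have h5 : pApply Φ p.1 = Φ q := by
            rw [← hq1]; exact st18_pApply_of_mem Φ q.2
          rw [← hq2, ← hq1]
          exact (st18_pApply_of_mem Φ q.2).symm
      have hΦcont : Continuous Φlin := Φlin.continuous_of_isClosed_graph (hgraph ▸ hclosed)
      set F : H → H :=
        fun x => pApply Hop (pApply Φ (R x)) - pApply Φ (pApply Hop (R x)) with hFdef
      have hHRadd : ∀ x z : H,
          pApply Hop (R (x + z)) = pApply Hop (R x) + pApply Hop (R z) := fun x z => by
        rw [map_add]; exact st18_pApply_add Hop (hRdom x) (hRdom z)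
      have hHRsmul : ∀ (a : ℂ) (x : H),
          pApply Hop (R (a • x)) = a • pApply Hop (R x) := fun a x => by
        rw [_root_.map_smul]; exact st18_pApply_smul Hop a (hRdom x)
      have hFadd : ∀ x z : H, F (x + z) = F x + F z := by
        intro x z
        simp only [hFdef]
        rw [hΦRadd, hHRadd, st18_pApply_add Φ (hD _) (hD _),
          st18_pApply_add Hop (hΦRdom x) (hΦRdom z)]
        abel
      have hFsmul : ∀ (a : ℂ) (x : H), F (a • x) = a • F x := by
        intro a x
        simp only [hFdef]
        rw [hΦRsmul, hHRsmul, st18_pApply_smul Φ a (hD _),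
          st18_pApply_smul Hop a (hΦRdom x), smul_sub]
      have hF0 : Tendsto (fun n => F (y n)) atTop (𝓝 0) :=
        st18_compact_weak_null hcommcomp hFadd hFsmul hM0 hyb hyweak
      have hΦr : Tendsto (fun n => pApply Φ (r n)) atTop (𝓝 0) := by
        have h := (hΦcont.tendsto 0).comp hrto
        rw [map_zero] at h; exact h
      have hid : ∀ n, pApply Hop (φ n - pApply Φ (φ n)) - (lam : ℂ) • (φ n - pApply Φ (φ n))
          = r n - F (y n) - pApply Φ (r n) := by
        intro n
        rw [hsplit n]
        have h1 : F (y n) = c (y n) - pApply Φ (pApply Hop (φ n)) := by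
          simp only [hFdef, hcdef]; rw [hRy n]
        have h2 : pApply Φ (r n) =
            pApply Φ (pApply Hop (φ n)) - (lam : ℂ) • pApply Φ (φ n) := by
          simp only [hrdef]
          rw [st18_pApply_sub Φ (hD _) (hD _), st18_pApply_smul Φ _ (hD _)]
        rw [h1, h2]
        simp only [hrdef, smul_sub]
        abel
      have h6 := (hrto.sub hF0).sub hΦr
      simp only [sub_zero] at h6
      exact h6.congr fun n => (hid n).symm
    · -- `Φ.domain ≠ ⊤`: junk values make `c` itself a compact operator.
      push_neg at hD
      obtain ⟨v, hv⟩ := hD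
      obtain ⟨K, hKc, hKn⟩ := hcommcomp
      obtain ⟨δ, hδpos, hδ⟩ := Metric.mem_nhds_iff.mp hKn
      have hFc : ∀ x : H, x ∉ Φ.domain →
          pApply Hop (pApply Φ (R x)) - pApply Φ (pApply Hop (R x)) = c x := by
        intro x hx
        have h1 : pApply Hop (R x) = x + -Complex.I • R x :=
          sub_eq_iff_eq_add.mp (hR.1 x).2
        have h2 : x + -Complex.I • R x ∉ Φ.domain := by
          intro h
          apply hx
          have h3 := Φ.domain.sub_mem h (Φ.domain.smul_mem (-Complex.I) (hRdomΦ x))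
          simpa using h3
        simp only [hcdef]
        rw [h1, st18_pApply_of_not_mem Φ h2, sub_zero]
      have hcK : ∀ x : H, ‖x‖ < δ / 2 → c x ∈ K := by
        intro x hx
        have hvn : (0 : ℝ) < ‖v‖ + 1 := by positivity
        have hne : ∀ k : ℕ, ∃ t : ℝ, 0 < t ∧ t ≤ δ / 2 / (‖v‖ + 1) / (k + 1) ∧
            x + (t : ℂ) • v ∉ Φ.domain := by
          intro k
          set b : ℝ := δ / 2 / (‖v‖ + 1) / (k + 1) with hbdef
          have hb : 0 < b := by positivity
          by_cases h1 : x + (b : ℂ) • v ∈ Φ.domain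
          · refine ⟨b / 2, by positivity, by linarith, fun h2 => hv ?_⟩
            have h3 := Φ.domain.sub_mem h1 h2
            have h4 : (((b : ℝ) : ℂ) - ((b / 2 : ℝ) : ℂ)) • v ∈ Φ.domain := by
              convert h3 using 1
              rw [sub_smul]
              abel
            have h5 : (((b : ℝ) : ℂ) - ((b / 2 : ℝ) : ℂ)) ≠ 0 := by
              have he : (((b : ℝ) : ℂ) - ((b / 2 : ℝ) : ℂ)) = ((b / 2 : ℝ) : ℂ) := by
                push_cast; ring
              rw [he]
              exact_mod_cast (by positivity : (0 : ℝ) < b / 2).ne'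
            have h6 := Φ.domain.smul_mem (((b : ℝ) : ℂ) - ((b / 2 : ℝ) : ℂ))⁻¹ h4
            rwa [inv_smul_smul₀ h5] at h6
          · exact ⟨b, hb, le_rfl, h1⟩
        choose t ht0 htb htd using hne
        have htto : Tendsto (fun k => ((t k : ℝ) : ℂ)) atTop (𝓝 0) := by
          have h7 : Tendsto t atTop (𝓝 0) := by
            apply squeeze_zero (fun k => (ht0 k).le) htb
            have h8 := tendsto_one_div_add_atTop_nhds_zero_nat.const_mul (δ / 2 / (‖v‖ + 1))
            rw [mul_zero] at h8
            refine h8.congr fun k => ?_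
            field_simp
          have h9 := (Complex.continuous_ofReal.tendsto 0).comp h7
          rw [Complex.ofReal_zero] at h9; exact h9
        have hlim : Tendsto (fun k => c (x + ((t k : ℝ) : ℂ) • v)) atTop (𝓝 (c x)) := by
          have heq : ∀ k, c (x + ((t k : ℝ) : ℂ) • v) = c x + ((t k : ℝ) : ℂ) • c v := by
            intro k; rw [hcadd, hcsmul]
          simp only [heq]
          have h10 := htto.smul_const (c v)
          rw [zero_smul] at h10
          simpa using tendsto_const_nhds.add h10
        have hmemk : ∀ k, c (x + ((t k : ℝ) : ℂ) • v) ∈ K := by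
          intro k
          rw [← hFc _ (htd k)]
          have h11 : x + ((t k : ℝ) : ℂ) • v ∈ Metric.ball (0 : H) δ := by
            rw [Metric.mem_ball, dist_zero_right]
            calc ‖x + ((t k : ℝ) : ℂ) • v‖ ≤ ‖x‖ + ‖((t k : ℝ) : ℂ) • v‖ := norm_add_le _ _
              _ < δ / 2 + δ / 2 := by
                  apply add_lt_add_of_lt_of_le hx
                  rw [norm_smul]
                  have h12 : ‖((t k : ℝ) : ℂ)‖ = t k := by
                    rw [Complex.norm_real, Real.norm_eq_abs, abs_of_pos (ht0 k)]
                  rw [h12]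
                  have h13 : t k ≤ δ / 2 / (‖v‖ + 1) := by
                    refine (htb k).trans ?_
                    rw [div_le_iff₀ (by positivity : (0:ℝ) < (k : ℝ) + 1)]
                    nlinarith [htb k, ht0 k, hδpos, hvn,
                      (by positivity : (0:ℝ) < δ / 2 / (‖v‖ + 1))]
                  calc t k * ‖v‖ ≤ δ / 2 / (‖v‖ + 1) * (‖v‖ + 1) := by
                        apply mul_le_mul h13 (by linarith [norm_nonneg v])
                          (norm_nonneg v) (by positivity)
                    _ = δ / 2 := by field_simp
              _ = δ := by ring
          exact hδ h11
        exact hKc.isClosed.mem_of_tendsto hlim (Filter.Eventually.of_forall hmemk)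
      have hccomp : IsCompactOperator c :=
        ⟨K, hKc, Filter.mem_of_superset (Metric.ball_mem_nhds 0 (by positivity : (0:ℝ) < δ/2))
          fun x hx => hcK x (by simpa [dist_zero_right] using hx)⟩
      have hc0 : Tendsto (fun n => c (y n)) atTop (𝓝 0) :=
        st18_compact_weak_null hccomp hcadd hcsmul hM0 hyb hyweak
      have hid : ∀ n, pApply Hop (φ n - pApply Φ (φ n)) - (lam : ℂ) • (φ n - pApply Φ (φ n))
          = r n - c (y n) + (lam : ℂ) • pApply Φ (φ n) := by
        intro n
        rw [hsplit n]
        simp only [hrdef, smul_sub]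
        abel
      have h14 : Tendsto (fun n => (lam : ℂ) • pApply Φ (φ n)) atTop (𝓝 0) := by
        have := hA.const_smul (lam : ℂ)
        simpa using this
      have h15 := (hrto.sub hc0).add h14
      simp only [sub_zero, add_zero] at h15
      exact h15.congr fun n => (hid n).symm
  -- Assemble the normalized tail sequence.
  have hwdom : ∀ n, φ n - pApply Φ (φ n) ∈ Hop.domain := fun n =>
    Hop.domain.sub_mem (hmem n) (hdom _ (hmem n)).2
  have hwweak : ∀ z : H, Tendsto (fun m => ⟪φ m - pApply Φ (φ m), z⟫) atTop (𝓝 0) := by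
    intro z
    have h1 : Tendsto (fun m => ⟪pApply Φ (φ m), z⟫) atTop (𝓝 0) := by
      apply squeeze_zero_norm (fun m => norm_inner_le_norm (𝕜 := ℂ) _ z)
      have := hA.norm.mul_const ‖z‖
      simpa using this
    have h2 := (hweak z).sub h1
    rw [sub_zero] at h2
    refine h2.congr fun m => ?_
    rw [inner_sub_left]
  have hwnorm : Tendsto (fun n => ‖φ n - pApply Φ (φ n)‖) atTop (𝓝 1) := by
    have h1 : Tendsto (fun n => ‖φ n - pApply Φ (φ n)‖ - 1) atTop (𝓝 0) := by
      apply squeeze_zero_norm (fun n => ?_) (by simpa using hA.norm)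
      rw [Real.norm_eq_abs]
      calc |‖φ n - pApply Φ (φ n)‖ - 1| = |‖φ n - pApply Φ (φ n)‖ - ‖φ n‖| := by
            rw [hnorm1 n]
        _ ≤ ‖φ n - pApply Φ (φ n) - φ n‖ := abs_norm_sub_norm_le _ _
        _ = ‖pApply Φ (φ n)‖ := by
            rw [show φ n - pApply Φ (φ n) - φ n = -(pApply Φ (φ n)) by abel, norm_neg]
    have h2 := h1.add (tendsto_const_nhds : Tendsto (fun _ : ℕ => (1:ℝ)) atTop (𝓝 1))
    rw [zero_add] at h2
    refine h2.congr fun n => ?_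
    ring
  have hev : ∀ᶠ n in atTop, (1 : ℝ) / 2 < ‖φ n - pApply Φ (φ n)‖ :=
    hwnorm.eventually (lt_mem_nhds (by norm_num))
  obtain ⟨N, hN⟩ := eventually_atTop.mp hev
  have hwm : ∀ n : ℕ, (1 : ℝ) / 2 < ‖φ (n + N) - pApply Φ (φ (n + N))‖ := fun n =>
    hN (n + N) (Nat.le_add_left N n)
  have hwpos : ∀ n : ℕ, (0 : ℝ) < ‖φ (n + N) - pApply Φ (φ (n + N))‖ := fun n =>
    lt_trans (by norm_num) (hwm n)
  set cc : ℕ → ℂ := fun n => ((‖φ (n + N) - pApply Φ (φ (n + N))‖⁻¹ : ℝ) : ℂ) with hccdef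
  refine ⟨fun n => cc n • φ (n + N), fun n => Hop.domain.smul_mem _ (hmem _), ?_⟩
  have hkey : ∀ n, cc n • φ (n + N) - pApply Φ (cc n • φ (n + N)) =
      cc n • (φ (n + N) - pApply Φ (φ (n + N))) := by
    intro n
    rw [st18_pApply_smul Φ _ (hdom _ (hmem _)).1, smul_sub]
  have hccnorm : ∀ n, ‖cc n‖ ≤ 2 := by
    intro n
    rw [hccdef]
    simp only [Complex.norm_real, Real.norm_eq_abs]
    rw [abs_of_nonneg (inv_nonneg.mpr (norm_nonneg _))]
    rw [show (2 : ℝ) = ((1:ℝ)/2)⁻¹ by norm_num]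
    exact inv_anti₀ (by norm_num) (hwm n).le
  have hshift : Tendsto (fun n : ℕ => n + N) atTop atTop := tendsto_add_atTop_nat N
  refine ⟨fun n => ?_, fun n => ?_, fun z => ?_, ?_⟩
  · simp only [hkey n]
    exact Hop.domain.smul_mem _ (hwdom _)
  · simp only [hkey n]
    rw [norm_smul, hccdef]
    simp only [Complex.norm_real, Real.norm_eq_abs]
    rw [abs_of_nonneg (inv_nonneg.mpr (norm_nonneg _))]
    exact inv_mul_cancel₀ (hwpos n).ne'
  · refine squeeze_zero_norm
      (a := fun n => 2 * ‖⟪φ (n + N) - pApply Φ (φ (n + N)), z⟫‖) (fun n => ?_) ?_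
    · simp only [hkey n]
      rw [inner_smul_left, norm_mul, RCLike.norm_conj]
      exact mul_le_mul_of_nonneg_right (hccnorm n) (norm_nonneg _)
    · have h1 := ((hwweak z).comp hshift).norm.const_mul 2
      simpa using h1
  · refine squeeze_zero_norm
      (a := fun n => 2 * ‖pApply Hop (φ (n + N) - pApply Φ (φ (n + N))) -
        (lam : ℂ) • (φ (n + N) - pApply Φ (φ (n + N)))‖) (fun n => ?_) ?_
    swap
    · have h1 := ((hB.comp hshift).norm.const_mul 2)
      simpa using h1
    · simp only [hkey n]
      rw [st18_pApply_smul Hop _ (hwdom _), smul_comm ((lam : ℂ)) (cc n), ← smul_sub,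
        norm_smul]
      exact mul_le_mul_of_nonneg_right (hccnorm n) (norm_nonneg _)

end
end
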